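/- arXiv:2505.15149 — 2 statements merged into one kernel-verified Lean document; each statement's English description precedes it below -/
import Mathlib

section
/- Let G be a nontrivial deficiency-critical connected graph, let the vertex set be partitioned into levels L_0, L_1, ..., L_N by distance from a fixed vertex x_0 (L_i = vertices at distance i), with L_N the last nonempty level. Then for every vertex x ∈ L_{N-1} having a neighbor in L_N, there exist two distinct vertices y₁, y₂ ∈ L_N with N(y₁) = N(y₂) = {x}. -/
/-!
For an edge `uv`, a maximum matching of `G - u - v` extends by `uv`, so `G - u - v` has
deficiency at least that of `G`. In a deficiency-critical graph `G - u - v` is therefore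
disconnected, and nonempty since `G` has positive deficiency.

Removing two adjacent vertices of the last level would leave every other vertex with a
neighbour closer to `x₀`, hence a connected graph: the last level is independent. Now let
`q` be a last-level neighbour of `x`. If no other last-level vertex were pendant at `x`,
each of them would keep a neighbour in a lower level after deleting `x` and `q`, while lower
vertices keep their predecessors, so `G - x - q` would be connected (for `N ≥ 2`) or empty
(for `N = 1`, where `x = x₀`). Applying this twice yields two pendant vertices.
-/

open SimpleGraph

/-- The deficiency of a graph: number of vertices left unsaturated by a maximum matching. -/
noncomputable def deficiency {V : Type*} (G : SimpleGraph V) : ℕ :=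
  Nat.card V - sSup {n | ∃ M : G.Subgraph, M.IsMatching ∧ M.verts.ncard = n}

def matchingSizes {V : Type*} (G : SimpleGraph V) : Set ℕ :=
  {n | ∃ M : G.Subgraph, M.IsMatching ∧ M.verts.ncard = n}

lemma deficiency_eq_card_sub_sSup_matchingSizes {V : Type*} (G : SimpleGraph V) :
    deficiency G = Nat.card V - sSup (matchingSizes G) := rfl

section Deficiency

variable {V : Type*} [Finite V] {G : SimpleGraph V}

lemma le_card_of_mem_matchingSizes {n : ℕ} (hn : n ∈ matchingSizes G) : n ≤ Nat.card V := by
  obtain ⟨M, -, rfl⟩ := hn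
  simpa [Set.ncard_univ] using Set.ncard_le_ncard (Set.subset_univ M.verts)

lemma SimpleGraph.Subgraph.IsMatching.ncard_verts_add_deficiency_le {M : G.Subgraph}
    (hM : M.IsMatching) : M.verts.ncard + deficiency G ≤ Nat.card V := by
  have hmem : M.verts.ncard ∈ matchingSizes G := ⟨M, hM, rfl⟩
  have hle := le_csSup ⟨_, fun _ => le_card_of_mem_matchingSizes⟩ hmem
  have hsup := csSup_le ⟨_, hmem⟩ fun _ => le_card_of_mem_matchingSizes (G := G)
  rw [deficiency_eq_card_sub_sSup_matchingSizes]
  omega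

lemma exists_isMatching_ncard_verts_add_deficiency_eq :
    ∃ M : G.Subgraph, M.IsMatching ∧ M.verts.ncard + deficiency G = Nat.card V := by
  have hbot : (⊥ : G.Subgraph).IsMatching := fun _ hv => hv.elim
  obtain ⟨M, hM, hMsup⟩ : sSup (matchingSizes G) ∈ matchingSizes G :=
    Nat.sSup_mem ⟨_, ⊥, hbot, rfl⟩ ⟨_, fun _ => le_card_of_mem_matchingSizes⟩
  refine ⟨M, hM, ?_⟩
  have := hM.ncard_verts_add_deficiency_le
  rw [deficiency_eq_card_sub_sSup_matchingSizes] at this ⊢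
  omega

lemma deficiency_le_deficiency_induce_compl_pair {u v : V} (huv : G.Adj u v) :
    deficiency G ≤ deficiency (G.induce ({u, v}ᶜ : Set V)) := by
  set s : Set V := {u, v}ᶜ
  obtain ⟨M₀, hM₀, hM₀card⟩ := exists_isMatching_ncard_verts_add_deficiency_eq (G := G.induce s)
  set M : G.Subgraph := M₀.map (Embedding.induce s).toHom
  have hM : M.IsMatching := hM₀.map _ (Embedding.induce (G := G) s).injective
  have hMs : M.verts ⊆ s := by
    rintro _ ⟨w, -, rfl⟩
    exact w.2
  have hdisj : Disjoint M.verts {u, v} := Set.subset_compl_iff_disjoint_right.mp hMs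
  have hMcard : M.verts.ncard = M₀.verts.ncard :=
    Set.ncard_image_of_injective _ Subtype.val_injective
  have hsup : (M ⊔ G.subgraphOfAdj huv).IsMatching := by
    refine hM.sup (.subgraphOfAdj huv) ?_
    rwa [hM.support_eq_verts, (Subgraph.IsMatching.subgraphOfAdj huv).support_eq_verts]
  have hsupcard : (M ⊔ G.subgraphOfAdj huv).verts.ncard = M₀.verts.ncard + 2 := by
    rw [Subgraph.verts_sup, subgraphOfAdj_verts, Set.ncard_union_eq hdisj, hMcard,
      Set.ncard_pair huv.ne]
  have hcard : Nat.card s + 2 = Nat.card V := by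
    rw [Nat.card_coe_set_eq, ← Set.ncard_pair huv.ne, add_comm,
      Set.ncard_add_ncard_compl]
  have := hsup.ncard_verts_add_deficiency_le
  omega

end Deficiency

def IsDeficiencyCritical {V : Type*} (G : SimpleGraph V) : Prop :=
  ∀ s : Set V, s ≠ Set.univ → (G.induce s).Connected → deficiency (G.induce s) < deficiency G

namespace IsDeficiencyCritical

variable {V : Type*} {G : SimpleGraph V} (hG : IsDeficiencyCritical G)
include hG

lemma deficiency_pos {u v : V} (huv : u ≠ v) : 0 < deficiency G := by
  have : Nonempty ({u} : Set V) := ⟨⟨u, rfl⟩⟩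
  have hne : ({u} : Set V) ≠ Set.univ := fun h => huv (h ▸ Set.mem_univ v).symm
  exact (Nat.zero_le _).trans_lt (hG {u} hne ⟨Preconnected.of_subsingleton⟩)

lemma not_connected_induce_compl_pair [Finite V] {u v : V} (huv : G.Adj u v) :
    ¬ (G.induce ({u, v}ᶜ : Set V)).Connected := fun hconn =>
  (hG _ (fun h => (h ▸ Set.mem_univ u) (by simp)) hconn).not_ge
    (deficiency_le_deficiency_induce_compl_pair huv)

lemma nonempty_compl_pair [Finite V] {u v : V} (huv : G.Adj u v) :
    ({u, v}ᶜ : Set V).Nonempty := by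
  by_contra hempty
  have hzero : deficiency (G.induce ({u, v}ᶜ : Set V)) = 0 := by
    rw [Set.not_nonempty_iff_eq_empty] at hempty
    simp [deficiency, hempty]
  have := deficiency_le_deficiency_induce_compl_pair huv
  have := hG.deficiency_pos huv.ne
  omega

end IsDeficiencyCritical

namespace SimpleGraph

variable {V : Type*} {G : SimpleGraph V}

lemma induce_connected_of_forall_exists_adj_lt {s : Set V} {r : V} (hr : r ∈ s) (f : V → ℕ)
    (hdesc : ∀ v ∈ s, v ≠ r → ∃ w ∈ s, G.Adj v w ∧ f w < f v) :
    (G.induce s).Connected := by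
  have hreach : ∀ n, ∀ v (hv : v ∈ s), f v = n → (G.induce s).Reachable ⟨v, hv⟩ ⟨r, hr⟩ := by
    intro n
    induction n using Nat.strong_induction_on with
    | _ n ih =>
      rintro v hv rfl
      by_cases hvr : v = r
      · subst hvr
        rfl
      obtain ⟨w, hw, hvw, hlt⟩ := hdesc v hv hvr
      exact (show (G.induce s).Adj ⟨v, hv⟩ ⟨w, hw⟩ from hvw).reachable.trans (ih _ hlt w hw rfl)
  rw [connected_iff_exists_forall_reachable]
  exact ⟨⟨r, hr⟩, fun v => (hreach _ v.1 v.2 rfl).symm⟩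

lemma Connected.exists_adj_dist_lt (hconn : G.Connected) {u v : V} (hvu : v ≠ u) :
    ∃ w, G.Adj v w ∧ G.dist u w < G.dist u v := by
  obtain ⟨p, hp⟩ := hconn.exists_walk_length_eq_dist v u
  cases p with
  | nil => exact absurd rfl hvu
  | cons hvw q =>
    refine ⟨_, hvw, ?_⟩
    rw [dist_comm, dist_comm (u := u), ← hp, Walk.length_cons]
    exact Nat.lt_succ_of_le (dist_le q)

end SimpleGraph

namespace IsDeficiencyCritical

variable {V : Type*} [Finite V] {G : SimpleGraph V} (hG : IsDeficiencyCritical G)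
  (hconn : G.Connected) {x₀ : V} {N : ℕ} (hNmax : ∀ v, G.dist x₀ v ≤ N)
include hG hconn hNmax

lemma not_adj_of_dist_eq {u v : V} (hu : G.dist x₀ u = N) (hv : G.dist x₀ v = N) :
    ¬ G.Adj u v := by
  intro huv
  have hN : N ≠ 0 := by
    rintro rfl
    exact huv.ne ((hconn.dist_eq_zero_iff.1 hu).symm.trans (hconn.dist_eq_zero_iff.1 hv))
  refine hG.not_connected_induce_compl_pair huv
    (induce_connected_of_forall_exists_adj_lt (r := x₀) ?_ (G.dist x₀) ?_)
  · simp only [Set.mem_compl_iff, Set.mem_insert_iff, Set.mem_singleton_iff, not_or]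
    constructor <;> rintro rfl <;> rw [dist_self] at * <;> omega
  · intro w _ hwx₀
    obtain ⟨w', hww', hlt⟩ := hconn.exists_adj_dist_lt hwx₀
    refine ⟨w', ?_, hww', hlt⟩
    have := hNmax w
    simp only [Set.mem_compl_iff, Set.mem_insert_iff, Set.mem_singleton_iff, not_or]
    constructor <;> rintro rfl <;> omega

lemma exists_ne_dist_eq_neighborSet_eq_singleton {x q : V} (hx : G.dist x₀ x = N - 1)
    (hxq : G.Adj x q) (hq : G.dist x₀ q = N) :
    ∃ v, v ≠ q ∧ G.dist x₀ v = N ∧ G.neighborSet v = {x} := by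
  have hN : N ≠ 0 := by
    rintro rfl
    exact hxq.ne ((hconn.dist_eq_zero_iff.1 hx).symm.trans (hconn.dist_eq_zero_iff.1 hq))
  rcases (by omega : N = 1 ∨ 2 ≤ N) with rfl | hN
  · obtain rfl : x₀ = x := hconn.dist_eq_zero_iff.1 hx
    have hlevel : ∀ w, w ≠ x₀ → G.dist x₀ w = 1 := fun w hw =>
      le_antisymm (hNmax w) (hconn.pos_dist_of_ne (Ne.symm hw))
    obtain ⟨v, hv⟩ := hG.nonempty_compl_pair hxq
    simp only [Set.mem_compl_iff, Set.mem_insert_iff, Set.mem_singleton_iff, not_or] at hv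
    refine ⟨v, hv.2, hlevel v hv.1, Set.ext fun z => ⟨fun hvz => ?_, ?_⟩⟩
    · by_contra hzx
      exact hG.not_adj_of_dist_eq hconn hNmax (hlevel v hv.1) (hlevel z hzx) hvz
    · rintro rfl
      exact (dist_eq_one_iff_adj.1 (hlevel v hv.1)).symm
  · by_contra! hpend
    refine hG.not_connected_induce_compl_pair hxq
      (induce_connected_of_forall_exists_adj_lt (r := x₀) ?_ (G.dist x₀) ?_)
    · simp only [Set.mem_compl_iff, Set.mem_insert_iff, Set.mem_singleton_iff, not_or]
      constructor <;> rintro rfl <;> rw [dist_self] at * <;> omega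
    · intro v hv hvx₀
      simp only [Set.mem_compl_iff, Set.mem_insert_iff, Set.mem_singleton_iff, not_or] at hv ⊢
      obtain ⟨w, hvw, hw⟩ := hconn.exists_adj_dist_lt hvx₀
      by_cases hvN : G.dist x₀ v = N
      · obtain ⟨z, hvz, hzx⟩ : ∃ z, G.Adj v z ∧ z ≠ x := by
          by_contra! h
          exact hpend v hv.2 hvN ((Set.Nonempty.subset_singleton_iff ⟨w, hvw⟩).1 h)
        have hzN : G.dist x₀ z ≠ N := fun hzN => hG.not_adj_of_dist_eq hconn hNmax hvN hzN hvz
        have := hNmax z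
        refine ⟨z, ⟨hzx, ?_⟩, hvz, by omega⟩
        rintro rfl
        exact hzN hq
      · have := hNmax v
        refine ⟨w, ⟨?_, ?_⟩, hvw, hw⟩ <;> rintro rfl <;> omega

end IsDeficiencyCritical

theorem stmt_4_general {V : Type*} [Fintype V] (G : SimpleGraph V)
    (hconn : G.Connected)
    (hcrit : ∀ s : Set V, s ≠ Set.univ → (G.induce s).Connected →
      deficiency (G.induce s) < deficiency G)
    (x₀ : V) (N : ℕ)
    (hNmax : ∀ v, G.dist x₀ v ≤ N)
    (x : V) (hx : G.dist x₀ x = N - 1)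
    (hxnbr : ∃ y, G.Adj x y ∧ G.dist x₀ y = N) :
    ∃ y₁ y₂ : V, y₁ ≠ y₂ ∧ G.dist x₀ y₁ = N ∧ G.dist x₀ y₂ = N ∧
      G.neighborSet y₁ = {x} ∧ G.neighborSet y₂ = {x} := by
  obtain ⟨y, hxy, hy⟩ := hxnbr
  obtain ⟨y₁, -, hy₁, hy₁x⟩ :=
    IsDeficiencyCritical.exists_ne_dist_eq_neighborSet_eq_singleton hcrit hconn hNmax hx hxy hy
  have hxy₁ : G.Adj x y₁ := (show x ∈ G.neighborSet y₁ by rw [hy₁x]; rfl).symm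
  obtain ⟨y₂, hy₂y₁, hy₂, hy₂x⟩ :=
    IsDeficiencyCritical.exists_ne_dist_eq_neighborSet_eq_singleton hcrit hconn hNmax hx hxy₁ hy₁
  exact ⟨y₁, y₂, hy₂y₁.symm, hy₁, hy₂, hy₁x, hy₂x⟩

theorem stmt_4 {V : Type*} [Fintype V] (G : SimpleGraph V)
    (hconn : G.Connected) (hnontrivial : 2 ≤ Fintype.card V)
    (hcrit : ∀ s : Set V, s ≠ Set.univ → (G.induce s).Connected →
      deficiency (G.induce s) < deficiency G)
    (x₀ : V) (N : ℕ)
    (hNmax : ∀ v, G.dist x₀ v ≤ N) (hNne : ∃ v, G.dist x₀ v = N)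
    (x : V) (hx : G.dist x₀ x = N - 1)
    (hxnbr : ∃ y, G.Adj x y ∧ G.dist x₀ y = N) :
    ∃ y₁ y₂ : V, y₁ ≠ y₂ ∧ G.dist x₀ y₁ = N ∧ G.dist x₀ y₂ = N ∧
      G.neighborSet y₁ = {x} ∧ G.neighborSet y₂ = {x} :=
  stmt_4_general G hconn hcrit x₀ N hNmax x hx hxnbr
end

section
/- Let T_n^p be the graph obtained from the complete bipartite graph K_{2,n} by attaching one copy of D_n^p (path on p vertices plus n leaves at one end) at each of the two vertices of degree n. Then def(T_{n-2}^p) = 3n − 8 for n ≥ 4 and odd p ≥ 3. -/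
open SimpleGraph

/-- `T_n^p`: the graph obtained from `K_{2,n}` by attaching one copy of `D_n^p`
(a path on `p` vertices with `n` extra leaves at one end) at each of the two vertices
of degree `n`. `Sum.inl (s, Sum.inl a)` is path position `a` on side `s` (position `0`
being the degree-`n` vertex of `K_{2,n}`), `Sum.inl (s, Sum.inr k)` the leaves attached
at path position `p-1` on side `s`, and `Sum.inr t` the `n` middle vertices of `K_{2,n}`. -/
def tnpGraph (n p : ℕ) : SimpleGraph ((Fin 2 × (Fin p ⊕ Fin n)) ⊕ Fin n) :=
  SimpleGraph.fromRel (fun a b =>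
    match a, b with
    | Sum.inl (s, Sum.inl a'), Sum.inl (s', Sum.inl b') => s = s' ∧ (a' : ℕ) + 1 = (b' : ℕ)
    | Sum.inl (s, Sum.inl a'), Sum.inl (s', Sum.inr _) => s = s' ∧ (a' : ℕ) = p - 1
    | Sum.inl (_, Sum.inl a'), Sum.inr _ => (a' : ℕ) = 0
    | _, _ => False)

/-!
For odd `p = 2q + 1` the even positions of the two paths form a vertex cover of `T_{n-2}^p`
with `p + 1` vertices. Pairing each of them with the next path vertex, and the last one with a
leaf, gives a matching saturating twice as many vertices, which is optimal since every matching
edge contains a cover vertex. So a maximum matching leaves `2p + 3(n - 2) - 2(p + 1) = 3n - 8`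
vertices unsaturated.
-/

open Set

namespace SimpleGraph

variable {V : Type*} {G : SimpleGraph V}

theorem Subgraph.IsMatching.ncard_verts_le_two_mul {M : G.Subgraph} (hM : M.IsMatching)
    {C : Set V} (hC : G.IsVertexCover C) (hCfin : C.Finite) : M.verts.ncard ≤ 2 * C.ncard := by
  have hpartner : ∀ v ∈ M.verts, ∃ w, M.Adj v w := fun v hv => (hM hv).exists
  choose! partner hpartner using hpartner
  have hout : (M.verts \ C).ncard ≤ C.ncard := by
    refine ncard_le_ncard_of_injOn partner ?_ ?_ hCfin
    · rintro v ⟨hv, hvC⟩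
      exact (hC (M.adj_sub (hpartner v hv))).resolve_left hvC
    · rintro a ⟨ha, -⟩ b ⟨hb, -⟩ hab
      exact hM.eq_of_adj_right (hpartner a ha) (hab ▸ hpartner b hb)
  calc M.verts.ncard ≤ (M.verts ∩ C).ncard + (M.verts \ C).ncard := by
        conv_lhs => rw [← inter_union_sdiff M.verts C]
        exact ncard_union_le _ _
    _ ≤ C.ncard + C.ncard := add_le_add (ncard_le_ncard inter_subset_right hCfin) hout
    _ = 2 * C.ncard := (two_mul _).symm

theorem Subgraph.IsMatching.exists_verts_eq_range_union_range {ι : Type*} {u w : ι → V}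
    (hu : u.Injective) (hw : w.Injective) (hdisj : Disjoint (range u) (range w))
    (hadj : ∀ i, G.Adj (u i) (w i)) :
    ∃ M : G.Subgraph, M.verts = range u ∪ range w ∧ M.IsMatching := by
  refine IsMatching.exists_of_disjoint_sets_of_equiv hdisj
    ((Equiv.ofInjective u hu).symm.trans (Equiv.ofInjective w hw)) ?_
  rintro ⟨_, i, rfl⟩
  simpa [Equiv.ofInjective_symm_apply] using hadj i

theorem deficiency_eq_of_isMatching_of_isVertexCover [Finite V] {M : G.Subgraph}
    (hM : M.IsMatching) {C : Set V} (hC : G.IsVertexCover C) (hMC : M.verts.ncard = 2 * C.ncard) :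
    deficiency G = Nat.card V - 2 * C.ncard := by
  refine congrArg (Nat.card V - ·) (IsGreatest.csSup_eq ⟨⟨M, hM, hMC⟩, ?_⟩)
  rintro _ ⟨M', hM', rfl⟩
  exact hM'.ncard_verts_le_two_mul hC C.toFinite

end SimpleGraph

namespace TnpGraph

variable (k q : ℕ)

abbrev Vert := (Fin 2 × (Fin (2 * q + 1) ⊕ Fin (k + 1))) ⊕ Fin (k + 1)

def evenPathVertex (x : Fin 2 × Fin (q + 1)) : Vert k q :=
  .inl (x.1, .inl ⟨2 * x.2, by omega⟩)

def evenPathPartner (x : Fin 2 × Fin (q + 1)) : Vert k q :=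
  if h : (x.2 : ℕ) < q then .inl (x.1, .inl ⟨2 * x.2 + 1, by omega⟩) else .inl (x.1, .inr 0)

theorem evenPathVertex_injective : (evenPathVertex k q).Injective := by
  intro x y h
  simp only [evenPathVertex, Sum.inl.injEq, Prod.mk.injEq, Fin.mk.injEq] at h
  exact Prod.ext h.1 (Fin.ext (by omega))

theorem evenPathPartner_injective : (evenPathPartner k q).Injective := by
  intro x y h
  simp only [evenPathPartner] at h
  split_ifs at h <;> simp only [Sum.inl.injEq, Prod.mk.injEq, Fin.mk.injEq, reduceCtorEq,
    and_false] at h <;> exact Prod.ext h.1 (Fin.ext (by omega))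

theorem disjoint_range_evenPathVertex_evenPathPartner :
    Disjoint (range (evenPathVertex k q)) (range (evenPathPartner k q)) := by
  rw [Set.disjoint_left]
  rintro _ ⟨x, rfl⟩ ⟨y, h⟩
  simp only [evenPathPartner, evenPathVertex] at h
  split_ifs at h <;> simp only [Sum.inl.injEq, Prod.mk.injEq, Fin.mk.injEq, reduceCtorEq,
    and_false] at h
  omega

theorem adj_evenPathVertex_evenPathPartner (x : Fin 2 × Fin (q + 1)) :
    (tnpGraph (k + 1) (2 * q + 1)).Adj (evenPathVertex k q x) (evenPathPartner k q x) := by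
  have := x.2.isLt
  simp only [tnpGraph, fromRel_adj, evenPathVertex, evenPathPartner]
  split_ifs
  · simp
  · simp only [ne_eq, Sum.inl.injEq, Prod.mk.injEq, reduceCtorEq, and_false, not_false_eq_true,
      add_tsub_cancel_right, mul_eq_mul_left_iff, OfNat.ofNat_ne_zero, or_false, true_and]
    omega

theorem mem_range_evenPathVertex {s : Fin 2} {a : Fin (2 * q + 1)} (ha : Even (a : ℕ)) :
    .inl (s, .inl a) ∈ range (evenPathVertex k q) := by
  obtain ⟨j, hj⟩ := ha
  refine ⟨(s, ⟨j, by omega⟩), ?_⟩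
  simp only [evenPathVertex, Sum.inl.injEq, Prod.mk.injEq, true_and, Fin.ext_iff]
  omega

theorem isVertexCover_range_evenPathVertex :
    (tnpGraph (k + 1) (2 * q + 1)).IsVertexCover (range (evenPathVertex k q)) := by
  rintro (⟨s, a | l⟩ | t) (⟨s', b | l'⟩ | t') h <;>
    simp only [tnpGraph, fromRel_adj, add_tsub_cancel_right, Fin.val_eq_zero_iff, ne_eq,
      Sum.inl.injEq, Sum.inr.injEq, Prod.mk.injEq, reduceCtorEq, not_and, and_false,
      not_false_eq_true, or_false, false_or, or_self, true_and] at h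
  · rcases Nat.even_or_odd (a : ℕ) with ha | ha
    · exact .inl (mem_range_evenPathVertex k q ha)
    · refine .inr (mem_range_evenPathVertex k q ?_)
      rw [Nat.odd_iff] at ha
      rw [Nat.even_iff]
      omega
  · exact .inl (mem_range_evenPathVertex k q ⟨q, by omega⟩)
  · exact .inl (mem_range_evenPathVertex k q (by simp [h]))
  · exact .inr (mem_range_evenPathVertex k q ⟨q, by omega⟩)
  · exact .inr (mem_range_evenPathVertex k q (by simp [h]))

theorem deficiency_tnpGraph : deficiency (tnpGraph (k + 1) (2 * q + 1)) = 3 * k + 1 := by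
  obtain ⟨M, hMverts, hM⟩ := Subgraph.IsMatching.exists_verts_eq_range_union_range
    (evenPathVertex_injective k q) (evenPathPartner_injective k q)
    (disjoint_range_evenPathVertex_evenPathPartner k q) (adj_evenPathVertex_evenPathPartner k q)
  have hmatched : M.verts.ncard = 2 * (range (evenPathVertex k q)).ncard := by
    rw [hMverts, ncard_union_eq (disjoint_range_evenPathVertex_evenPathPartner k q),
      ncard_range_of_injective (evenPathVertex_injective k q),
      ncard_range_of_injective (evenPathPartner_injective k q), two_mul]
  rw [deficiency_eq_of_isMatching_of_isVertexCover hM (isVertexCover_range_evenPathVertex k q)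
    hmatched, ncard_range_of_injective (evenPathVertex_injective k q)]
  simp only [Nat.card_eq_fintype_card, Fintype.card_sum, Fintype.card_prod, Fintype.card_fin]
  omega

end TnpGraph

theorem stmt_16_general (n p : ℕ) (hn : 4 ≤ n) (hp : Odd p) :
    deficiency (tnpGraph (n - 2) p) = 3 * n - 8 := by
  obtain ⟨q, rfl⟩ := hp
  obtain ⟨k, hk⟩ : ∃ k, n - 2 = k + 1 := ⟨n - 3, by omega⟩
  rw [hk, TnpGraph.deficiency_tnpGraph]
  omega

theorem stmt_16 (n p : ℕ) (hn : 4 ≤ n) (hp : Odd p) (hp3 : 3 ≤ p) :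
    deficiency (tnpGraph (n - 2) p) = 3 * n - 8 :=
  stmt_16_general n p hn hp
end
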